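/- Let G ≤ Sym(X) be a transitive permutation group on a finite set X with a normal block system 𝓑, let N = fix_G(𝓑), fix a block B₀ ∈ 𝓑, and suppose T = Soc(N^{B₀}), the socle of the permutation group induced by N on B₀, is a transitive nonabelian simple group. Suppose Soc(N) contains two isomorphic semiregular subgroups U and V, and suppose that any two semiregular subgroups of T isomorphic to U^{B₀} are conjugate in T. Then there exists δ ∈ fix_G(𝓑) such that U and δ⁻¹Vδ have exactly the same orbits on X. -/

import Mathlib

open Equiv Pointwise

section PermGroupDefs

variable {Y : Type*}

/-- A subgroup of `Equiv.Perm Y` is transitive if it acts transitively on `Y`. -/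
def SubTrans (G : Subgroup (Equiv.Perm Y)) : Prop :=
  ∀ x y : Y, ∃ g ∈ G, g x = y

/-- A subgroup of `Equiv.Perm Y` is semiregular if only its identity fixes a point. -/
def SubSemiregular (H : Subgroup (Equiv.Perm Y)) : Prop :=
  ∀ h ∈ H, (∃ x : Y, h x = x) → h = 1

/-- A subgroup of `Equiv.Perm Y` is regular if it is transitive and semiregular. -/
def SubRegular (H : Subgroup (Equiv.Perm Y)) : Prop :=
  SubTrans H ∧ SubSemiregular H

/-- Two-transitivity. -/
def Sub2Trans (G : Subgroup (Equiv.Perm Y)) : Prop :=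
  ∀ x₁ x₂ y₁ y₂ : Y, x₁ ≠ x₂ → y₁ ≠ y₂ → ∃ g ∈ G, g x₁ = y₁ ∧ g x₂ = y₂

/-- Orbit of a point under a subgroup of `Equiv.Perm Y`. -/
def SubOrbit (H : Subgroup (Equiv.Perm Y)) (x : Y) : Set Y :=
  {y | ∃ h ∈ H, h x = y}

/-- The set of orbits of a subgroup of `Equiv.Perm Y`. -/
def SubOrbits (H : Subgroup (Equiv.Perm Y)) : Set (Set Y) :=
  Set.range (SubOrbit H)

/-- A block for a subgroup of `Equiv.Perm Y`. -/
def SubIsBlock (G : Subgroup (Equiv.Perm Y)) (B : Set Y) : Prop :=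
  ∀ g ∈ G, (g : Equiv.Perm Y) '' B = B ∨ Disjoint ((g : Equiv.Perm Y) '' B) B

/-- Primitivity: transitive and the only blocks are trivial. -/
def SubPrimitive (G : Subgroup (Equiv.Perm Y)) : Prop :=
  SubTrans G ∧ ∀ B : Set Y, B.Nonempty → SubIsBlock G B → B = Set.univ ∨ ∃ x, B = {x}

/-- A block system: a `G`-invariant partition of `Y`. -/
def IsBlockSystem (G : Subgroup (Equiv.Perm Y)) (P : Set (Set Y)) : Prop :=
  (∀ B ∈ P, B.Nonempty) ∧ (∀ x : Y, ∃! B : Set Y, B ∈ P ∧ x ∈ B) ∧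
    (∀ g ∈ G, ∀ B ∈ P, (g : Equiv.Perm Y) '' B ∈ P)

/-- A normal block system: the set of orbits of a normal subgroup. -/
def IsNormalBlockSystem (G : Subgroup (Equiv.Perm Y)) (P : Set (Set Y)) : Prop :=
  IsBlockSystem G P ∧
    ∃ N : Subgroup (Equiv.Perm Y), N ≤ G ∧ (∀ g ∈ G, ∀ x ∈ N, g * x * g⁻¹ ∈ N) ∧
      P = SubOrbits N

/-- `P` refines `Q`: every block of `P` is contained in a block of `Q`. -/
def Refines (P Q : Set (Set Y)) : Prop :=
  ∀ B ∈ P, ∃ C ∈ Q, B ⊆ C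

/-- The partition of `Y` into singletons. -/
def SingletonPartition (Y : Type*) : Set (Set Y) :=
  Set.range fun x : Y => ({x} : Set Y)

/-- A minimal (nontrivial) block system. -/
def IsMinimalBlockSystem (G : Subgroup (Equiv.Perm Y)) (P : Set (Set Y)) : Prop :=
  IsBlockSystem G P ∧ P ≠ SingletonPartition Y ∧
    ∀ Q : Set (Set Y), IsBlockSystem G Q → Refines Q P →
      Q = SingletonPartition Y ∨ Q = P

/-- `fix_G(P)`: elements of `G` stabilizing every block of `P` setwise. -/
def FixBlocks (G : Subgroup (Equiv.Perm Y)) (P : Set (Set Y)) : Subgroup (Equiv.Perm Y) :=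
  G ⊓ ⨅ B ∈ P, MulAction.stabilizer (Equiv.Perm Y) B

/-- The pointwise stabilizer of a set, inside the full symmetric group. -/
def PointStab (A : Set Y) : Subgroup (Equiv.Perm Y) :=
  ⨅ a ∈ A, MulAction.stabilizer (Equiv.Perm Y) a

/-- The support of a subgroup of `Equiv.Perm Y`. -/
def SubSupp (H : Subgroup (Equiv.Perm Y)) : Set Y :=
  {y | ∃ h ∈ H, h y ≠ y}

/-- `N` is a normal subgroup of the subgroup `H`. -/
def NormalIn {G : Type*} [Group G] (H N : Subgroup G) : Prop :=
  N ≤ H ∧ ∀ h ∈ H, ∀ x ∈ N, h * x * h⁻¹ ∈ N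

/-- `N` is a minimal normal subgroup of the subgroup `H`. -/
def MinimalNormalIn {G : Type*} [Group G] (H N : Subgroup G) : Prop :=
  NormalIn H N ∧ N ≠ ⊥ ∧ ∀ M : Subgroup G, NormalIn H M → M ≤ N → M = ⊥ ∨ M = N

/-- The socle of a subgroup `H`: the subgroup generated by the minimal
normal subgroups of `H`. -/
def SocleIn {G : Type*} [Group G] (H : Subgroup G) : Subgroup G :=
  ⨆ N ∈ {N : Subgroup G | MinimalNormalIn H N}, N

/-- The conjugate subgroup `g⁻¹ H g`. -/
def ConjSub {G : Type*} [Group G] (g : G) (H : Subgroup G) : Subgroup G :=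
  Subgroup.map (MulAut.conj g⁻¹).toMonoidHom H

/-- The permutation of an invariant set induced by an element of its setwise stabilizer. -/
def restrictHom {G Y : Type*} [Group G] [MulAction G Y] (A : Set Y) :
    MulAction.stabilizer G A →* Equiv.Perm A where
  toFun g := (MulAction.toPerm (g : G)).subtypePerm (fun y => by
    have hA : (g : G) • A = A := MulAction.mem_stabilizer_iff.mp g.2
    symm
    constructor
    · intro hy
      have : (g : G) • y ∈ (g : G) • A := Set.smul_mem_smul_set hy
      rwa [hA] at this
    · intro hy
      have : (g : G) • y ∈ (g : G) • A := by rwa [hA]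
      exact Set.smul_mem_smul_set_iff.mp this)
  map_one' := by
    ext x
    simp [Equiv.Perm.subtypePerm]
  map_mul' g h := by
    ext x
    simp [Equiv.Perm.subtypePerm, mul_smul]

/-- The permutation group induced on an invariant set `A` by (the setwise stabilizer of `A`
in) a subgroup `H`. -/
def InducedSub {G Y : Type*} [Group G] [MulAction G Y] (H : Subgroup G) (A : Set Y) :
    Subgroup (Equiv.Perm A) :=
  Subgroup.map (restrictHom A) (H.comap (MulAction.stabilizer G A).subtype)

end PermGroupDefs

section ClassR

/-- The class `𝓡` of groups from Definition 1.7. -/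
def IsClassRGroup (R : Type*) [Group R] : Prop :=
  ∃ n : ℕ, 0 < n ∧ Odd n ∧ Squarefree n ∧
    (Nonempty (R ≃* Multiplicative (ZMod n)) ∨
     Nonempty (R ≃* Multiplicative (ZMod n × ZMod 2)) ∨
     Nonempty (R ≃* Multiplicative (ZMod n × ZMod 2 × ZMod 2)) ∨
     Nonempty (R ≃* Multiplicative (ZMod n × ZMod 2 × ZMod 2 × ZMod 2)) ∨
     Nonempty (R ≃* Multiplicative (ZMod n × ZMod 2 × ZMod 2 × ZMod 2 × ZMod 2)) ∨
     Nonempty (R ≃* Multiplicative (ZMod n × ZMod 4)) ∨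
     Nonempty (R ≃* Multiplicative (ZMod n) × QuaternionGroup 2) ∨
     (∃ o : ℕ, (o = 2 ∨ o = 4 ∨ o = 8) ∧
       ∃ ψ : Multiplicative (ZMod o) →* MulAut (Multiplicative (ZMod n)),
         ψ (Multiplicative.ofAdd 1) ≠ 1 ∧ ψ (Multiplicative.ofAdd 1) ^ 2 = 1 ∧
         Nonempty (R ≃* Multiplicative (ZMod n) ⋊[ψ] Multiplicative (ZMod o))))

end ClassR

section CI

/-- `σ` is an isomorphism between the ternary relational structures `R` and `S`. -/
def TernaryIso {X I : Type*} (R S : I → Set (X × X × X)) (σ : Equiv.Perm X) : Prop :=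
  ∀ i, (fun t : X × X × X => (σ t.1, σ t.2.1, σ t.2.2)) '' R i = S i

/-- A ternary relational structure on a group `G` is a Cayley object if all left
translations are automorphisms. -/
def CayleyTernary (G : Type*) [Group G] {I : Type*} (R : I → Set (G × G × G)) : Prop :=
  ∀ g : G, TernaryIso R R (Equiv.mulLeft g)

/-- `G` is a CI-group with respect to ternary relational structures. -/
def IsTernaryCI (G : Type*) [Group G] : Prop :=
  ∀ (I : Type) (R S : I → Set (G × G × G)), CayleyTernary G R → CayleyTernary G S →
    (∃ σ : Equiv.Perm G, TernaryIso R S σ) →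
    ∃ φ : G ≃* G, TernaryIso R S φ.toEquiv

/-- `σ` is an isomorphism between the binary relational structures `R` and `S`. -/
def BinaryIso {X I : Type*} (R S : I → Set (X × X)) (σ : Equiv.Perm X) : Prop :=
  ∀ i, (fun t : X × X => (σ t.1, σ t.2)) '' R i = S i

/-- A binary relational structure on a group `G` is a Cayley object if all left
translations are automorphisms. -/
def CayleyBinary (G : Type*) [Group G] {I : Type*} (R : I → Set (G × G)) : Prop :=
  ∀ g : G, BinaryIso R R (Equiv.mulLeft g)

/-- `G` is a CI-group with respect to binary relational structures. -/
def IsBinaryCI (G : Type*) [Group G] : Prop :=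
  ∀ (I : Type) (R S : I → Set (G × G)), CayleyBinary G R → CayleyBinary G S →
    (∃ σ : Equiv.Perm G, BinaryIso R S σ) →
    ∃ φ : G ≃* G, BinaryIso R S φ.toEquiv

end CI

section Closure

/-- `σ` belongs to the `k`-closure of `G ≤ Sym(Y)`: it preserves every orbit of the
componentwise action of `G` on `Y^k`. -/
def InKClosure {Y : Type*} (k : ℕ) (G : Subgroup (Equiv.Perm Y)) (σ : Equiv.Perm Y) : Prop :=
  ∀ t : Fin k → Y, ∃ g ∈ G, ∀ i, σ (t i) = g (t i)

/-- `G` is `k`-closed. -/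
def IsKClosed {Y : Type*} (k : ℕ) (G : Subgroup (Equiv.Perm Y)) : Prop :=
  ∀ σ : Equiv.Perm Y, InKClosure k G σ → σ ∈ G

/-- The inner holomorph of `G`: the subgroup of `Sym(G)` generated by the left and right
regular representations. -/
def InnerHolomorph (G : Type*) [Group G] : Subgroup (Equiv.Perm G) :=
  Subgroup.closure
    ((Set.range fun g : G => Equiv.mulLeft g) ∪ (Set.range fun g : G => Equiv.mulRight g))

end Closure

section Aux

variable {X : Type*}

open MulAction

lemma perm_smul_set (g : Equiv.Perm X) (A : Set X) : g • A = g '' A := rfl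

lemma mem_stab_iff {g : Equiv.Perm X} {A : Set X} :
    g ∈ MulAction.stabilizer (Equiv.Perm X) A ↔ g '' A = A := by
  rw [MulAction.mem_stabilizer_iff, perm_smul_set]

lemma restrictHom_apply' {A : Set X} (g : ↥(MulAction.stabilizer (Equiv.Perm X) A))
    (y : ↥A) : ((restrictHom (G := Equiv.Perm X) A g y : ↥A) : X) = (g : Equiv.Perm X) y := rfl

lemma mem_InducedSub {H : Subgroup (Equiv.Perm X)} {A : Set X} {x : Equiv.Perm ↥A} :
    x ∈ InducedSub H A ↔ ∃ g : ↥(MulAction.stabilizer (Equiv.Perm X) A),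
      (g : Equiv.Perm X) ∈ H ∧ restrictHom (G := Equiv.Perm X) A g = x := by
  constructor
  · rintro ⟨g, hg, rfl⟩
    exact ⟨g, hg, rfl⟩
  · rintro ⟨g, hg, rfl⟩
    exact ⟨g, hg, rfl⟩

end Aux


section SocleBasics

variable {P : Type*} [Group P]

lemma SocleIn_le (A : Subgroup P) : SocleIn A ≤ A := by
  apply iSup_le
  intro N
  apply iSup_le
  intro hN
  exact hN.1.1

lemma conjSub_eq (g : P) (H : Subgroup P) :
    ConjSub g H = Subgroup.map ((MulEquiv.toMonoidHom (MulAut.conj g⁻¹ : P ≃* P))) H := rfl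

lemma mem_ConjSub {g x : P} {H : Subgroup P} :
    x ∈ ConjSub g H ↔ ∃ h ∈ H, x = g⁻¹ * h * g := by
  constructor
  · rintro ⟨h, hh, rfl⟩
    exact ⟨h, hh, by simp [MulAut.conj]⟩
  · rintro ⟨h, hh, rfl⟩
    exact ⟨h, hh, by simp [MulAut.conj]⟩

lemma map_ConjSub {Q : Type*} [Group Q] (f : P →* Q) (g : P) (H : Subgroup P) :
    Subgroup.map f (ConjSub g H) = ConjSub (f g) (Subgroup.map f H) := by
  ext x
  simp only [Subgroup.mem_map, mem_ConjSub]
  constructor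
  · rintro ⟨y, ⟨h, hh, rfl⟩, rfl⟩
    exact ⟨f h, ⟨h, hh, rfl⟩, by simp⟩
  · rintro ⟨y, ⟨h, hh, rfl⟩, rfl⟩
    exact ⟨g⁻¹ * h * g, ⟨h, hh, rfl⟩, by simp⟩

/-- A nontrivial `NormalIn A` subgroup contains a `MinimalNormalIn A` subgroup. -/
lemma exists_minimalNormalIn [Finite P] (A : Subgroup P) :
    ∀ Q : Subgroup P, NormalIn A Q → Q ≠ ⊥ → ∃ M : Subgroup P, MinimalNormalIn A M ∧ M ≤ Q := by
  intro Q
  induction Q using WellFoundedLT.induction with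
  | ind Q IH =>
    intro hQ hQbot
    by_cases hmin : ∀ M : Subgroup P, NormalIn A M → M ≤ Q → M = ⊥ ∨ M = Q
    · exact ⟨Q, ⟨hQ, hQbot, hmin⟩, le_refl Q⟩
    · push_neg at hmin
      obtain ⟨M, hMn, hMle, hM⟩ := hmin
      obtain ⟨M', hM', hle'⟩ := IH M (lt_of_le_of_ne hMle hM.2) hMn hM.1
      exact ⟨M', hM', hle'.trans hMle⟩

/-- If the socle is simple, every minimal normal-in subgroup equals the socle. -/
lemma minimalNormal_eq_socle {A M : Subgroup P}
    (hS : IsSimpleGroup ↥(SocleIn A)) (hM : MinimalNormalIn A M) : M = SocleIn A := by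
  have hMle : M ≤ SocleIn A := le_iSup₂ (f := fun (N : Subgroup P) (_ : MinimalNormalIn A N) => N) M hM
  have hnormal : (M.subgroupOf (SocleIn A)).Normal := by
    constructor
    rintro ⟨m, hmS⟩ hm ⟨s, hsS⟩
    have hsA : s ∈ A := SocleIn_le A hsS
    have : s * m * s⁻¹ ∈ M := hM.1.2 s hsA m hm
    exact this
  rcases hS.eq_bot_or_eq_top_of_normal (M.subgroupOf (SocleIn A)) hnormal with h | h
  · exfalso
    apply hM.2.1
    rw [eq_bot_iff]
    intro m hm
    have : (⟨m, hMle hm⟩ : ↥(SocleIn A)) ∈ M.subgroupOf (SocleIn A) := hm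
    rw [h] at this
    simpa using congrArg Subtype.val (Subgroup.mem_bot.mp this)
  · rw [eq_top_iff] at h
    refine le_antisymm hMle ?_
    intro s hs
    have : (⟨s, hs⟩ : ↥(SocleIn A)) ∈ M.subgroupOf (SocleIn A) := h (Subgroup.mem_top _)
    exact this

/-- The socle is normal in `A`. -/
lemma socleIn_normalIn (A : Subgroup P) : NormalIn A (SocleIn A) := by
  refine ⟨SocleIn_le A, ?_⟩
  intro a ha
  have key : ∀ x ∈ SocleIn A, a * x * a⁻¹ ∈ SocleIn A := by
    have : Subgroup.map (MulAut.conj a).toMonoidHom (SocleIn A) ≤ SocleIn A := by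
      unfold SocleIn
      rw [Subgroup.map_iSup]
      apply iSup_le
      intro N
      rw [Subgroup.map_iSup]
      apply iSup_le
      intro hN
      have : Subgroup.map (MulAut.conj a).toMonoidHom N = N := by
        apply le_antisymm
        · rintro x ⟨n, hn, rfl⟩
          exact hN.1.2 a ha n hn
        · intro n hn
          exact ⟨a⁻¹ * n * a, by simpa using hN.1.2 a⁻¹ (inv_mem ha) n hn,
            by simp [MulAut.conj]; group⟩
      rw [this]
      exact le_iSup₂ (f := fun (N : Subgroup P) (_ : MinimalNormalIn A N) => N) N hN
    intro x hx
    exact this ⟨x, hx, by simp [MulAut.conj]⟩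
  exact key

end SocleBasics


section ProductLemmas

/-- In a nonabelian simple group, every nontrivial element has a non-commuting partner. -/
lemma exists_noncomm {T : Type*} [Group T] (hS : IsSimpleGroup T)
    (hna : ∃ a b : T, a * b ≠ b * a) {g : T} (hg : g ≠ 1) : ∃ b, g * b ≠ b * g := by
  rcases hS.eq_bot_or_eq_top_of_normal (Subgroup.center T) inferInstance with h | h
  · by_contra hc
    push_neg at hc
    have : g ∈ Subgroup.center T := Subgroup.mem_center_iff.mpr (fun b => (hc b).symm)
    rw [h] at this
    exact hg (Subgroup.mem_bot.mp this)
  · obtain ⟨a, b, hab⟩ := hna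
    exfalso
    apply hab
    have hb : b ∈ Subgroup.center T := h ▸ Subgroup.mem_top b
    exact Subgroup.mem_center_iff.mp hb a

/-- Normal subgroups of finite products of nonabelian simple groups are subproducts
(membership criterion form). -/
lemma normal_pi_mem {ι : Type*} [Fintype ι] [DecidableEq ι] {T : ι → Type*}
    [∀ i, Group (T i)] (hS : ∀ i, IsSimpleGroup (T i))
    (hna : ∀ i, ∃ a b : T i, a * b ≠ b * a)
    (N : Subgroup (∀ i, T i)) (hN : N.Normal)
    (x : ∀ i, T i) (hx : ∀ i, (∀ y ∈ N, y i = 1) → x i = 1) : x ∈ N := by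
  have claim : ∀ i : ι, (∃ y ∈ N, y i ≠ 1) → ∀ a : T i, Pi.mulSingle i a ∈ N := by
    intro i ⟨y, hyN, hyi⟩ a
    set K : Subgroup (T i) := N.comap (MonoidHom.mulSingle T i) with hK
    have hKnormal : K.Normal := hN.comap _
    have hKne : K ≠ ⊥ := by
      obtain ⟨b, hb⟩ := exists_noncomm (hS i) (hna i) hyi
      set z : ∀ j, T j := y * (Pi.mulSingle i b) * y⁻¹ * (Pi.mulSingle i b)⁻¹ with hz
      have hzN : z ∈ N := by
        have h1 : (Pi.mulSingle i b) * y⁻¹ * (Pi.mulSingle i b)⁻¹ ∈ N :=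
          hN.conj_mem y⁻¹ (inv_mem hyN) (Pi.mulSingle i b)
        have := N.mul_mem hyN h1
        simpa [hz, mul_assoc] using this
      have hzsingle : z = Pi.mulSingle i (y i * b * (y i)⁻¹ * b⁻¹) := by
        funext j
        by_cases hj : j = i
        · subst hj; simp [hz]
        · simp [hz, Pi.mulSingle_eq_of_ne hj]
      have hmem : y i * b * (y i)⁻¹ * b⁻¹ ∈ K := by
        rw [hK, Subgroup.mem_comap]
        rw [hzsingle] at hzN
        exact hzN
      intro hbot
      rw [hbot, Subgroup.mem_bot] at hmem
      apply hb
      have : y i * b * (y i)⁻¹ * b⁻¹ = 1 := hmem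
      calc y i * b = (y i * b * (y i)⁻¹ * b⁻¹) * (b * y i) := by group
        _ = b * y i := by rw [this, one_mul]
    have hKtop : K = ⊤ := by
      rcases (hS i).eq_bot_or_eq_top_of_normal K hKnormal with h | h
      · exact absurd h hKne
      · exact h
    have : a ∈ K := hKtop ▸ Subgroup.mem_top a
    exact this
  have hxprod := Finset.noncommProd_mulSingle x
  rw [← hxprod]
  apply Submonoid.noncommProd_mem
  intro i _
  by_cases hi : ∃ y ∈ N, y i ≠ 1
  · exact claim i hi (x i)
  · push_neg at hi
    have : x i = 1 := hx i hi
    rw [this]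
    simpa using N.one_mem

/-- Surjectivity onto families of simple quotients with pairwise distinct kernels. -/
lemma surj_family {H : Type*} [Group H] {ι : Type*} [DecidableEq ι] {P : ι → Type*}
    [∀ i, Group (P i)] (f : ∀ i, H →* P i) (s : Finset ι)
    (hsimple : ∀ i ∈ s, IsSimpleGroup ↥(f i).range)
    (hna : ∀ i ∈ s, ∃ a b : ↥(f i).range, a * b ≠ b * a)
    (hker : ∀ i ∈ s, ∀ j ∈ s, i ≠ j → (f i).ker ≠ (f j).ker)
    (t : ∀ i, ↥(f i).range) : ∃ h : H, ∀ i ∈ s, f i h = (t i : P i) := by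
  classical
  induction s using Finset.induction_on generalizing t with
  | empty => exact ⟨1, by simp⟩
  | @insert a s ha IH =>
    have hsimple' : ∀ i ∈ s, IsSimpleGroup ↥(f i).range :=
      fun i hi => hsimple i (Finset.mem_insert_of_mem hi)
    have hna' : ∀ i ∈ s, ∃ a b : ↥(f i).range, a * b ≠ b * a :=
      fun i hi => hna i (Finset.mem_insert_of_mem hi)
    have hker' : ∀ i ∈ s, ∀ j ∈ s, i ≠ j → (f i).ker ≠ (f j).ker :=
      fun i hi j hj => hker i (Finset.mem_insert_of_mem hi) j (Finset.mem_insert_of_mem hj)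
    have hsa : IsSimpleGroup ↥(f a).range := hsimple a (Finset.mem_insert_self a s)
    set K : Subgroup H := ⨅ i ∈ s, (f i).ker with hKdef
    have hKnormal : K.Normal := by
      constructor
      intro n hn g
      simp only [hKdef, Subgroup.mem_iInf] at hn ⊢
      intro i hi
      exact ((f i).normal_ker).conj_mem n (hn i hi) g
    have hKle : ∀ i ∈ s, K ≤ (f i).ker := by
      intro i hi x hx
      simp only [hKdef, Subgroup.mem_iInf] at hx
      exact hx i hi
    set Ka : Subgroup ↥(f a).range := Subgroup.map (f a).rangeRestrict K with hKadef
    have hKa_normal : Ka.Normal := hKnormal.map _ (f a).rangeRestrict_surjective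
    rcases hsa.eq_bot_or_eq_top_of_normal Ka hKa_normal with hbot | htop
    · -- contradiction case: K ≤ ker (f a)
      exfalso
      have hKlea : K ≤ (f a).ker := by
        intro x hx
        have hx' : (f a).rangeRestrict x ∈ Ka := ⟨x, hx, rfl⟩
        rw [hbot, Subgroup.mem_bot] at hx'
        have hcoe : f a x = ((f a).rangeRestrict x : P a) := rfl
        rw [MonoidHom.mem_ker, hcoe, hx']
        rfl
      let Q : ↥s → Type _ := fun i => ↥(f i.val).range
      let F : H →* ∀ i : ↥s, Q i := Pi.monoidHom (fun i => (f i.val).rangeRestrict)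
      have hFapp : ∀ (x : H) (i : ↥s), ((F x i : P i.val)) = f i.val x := fun x i => rfl
      have hFsurj : Function.Surjective F := by
        intro w
        obtain ⟨h, hh⟩ := IH hsimple' hna' hker'
          (fun i => if hi : i ∈ s then w ⟨i, hi⟩ else 1)
        refine ⟨h, funext fun i => ?_⟩
        apply Subtype.ext
        have h2 := hh i.val i.property
        rw [dif_pos i.property] at h2
        exact h2
      have hFker : F.ker = K := by
        ext x
        rw [MonoidHom.mem_ker, hKdef]
        simp only [Subgroup.mem_iInf]
        constructor
        · intro hx i hi
          rw [MonoidHom.mem_ker]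
          have h1 : F x ⟨i, hi⟩ = 1 := by rw [hx]; rfl
          have h2 := congrArg (Subtype.val) h1
          rw [hFapp] at h2
          exact h2
        · intro hx
          funext i
          apply Subtype.ext
          rw [hFapp]
          exact hx i.val i.property
      set φ : (∀ i : ↥s, Q i) →* P a :=
        (F.liftOfSurjective hFsurj) ⟨f a, by rw [hFker]; exact hKlea⟩ with hφdef
      have hφF : ∀ x : H, φ (F x) = f a x := fun x =>
        F.liftOfRightInverse_comp_apply _ _ ⟨f a, by rw [hFker]; exact hKlea⟩ x
      classical
      set D : Set ↥s := {i | ∀ y ∈ φ.ker, y i = 1} with hDdef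
      have hkerφmem : ∀ x : (∀ i : ↥s, Q i), (∀ i ∈ D, x i = 1) → x ∈ φ.ker := by
        intro x hx
        exact normal_pi_mem (fun i => hsimple i.val (Finset.mem_insert_of_mem i.property))
          (fun i => hna i.val (Finset.mem_insert_of_mem i.property)) φ.ker φ.normal_ker x
          (fun i hi => hx i (show i ∈ D from fun y hy => hi y hy))
      have hDne : D.Nonempty := by
        by_contra hD
        rw [Set.not_nonempty_iff_eq_empty] at hD
        have hfa1 : ∀ x : H, f a x = 1 := by
          intro x
          have h1 : F x ∈ φ.ker := hkerφmem _
            (fun i hi => by rw [hD] at hi; exact absurd hi (Set.notMem_empty i))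
          rw [← hφF x]
          exact h1
        obtain ⟨y, hyne⟩ := exists_ne (1 : ↥(f a).range)
        apply hyne
        obtain ⟨x, hx⟩ := y.property
        apply Subtype.ext
        rw [show (y : P a) = f a x from hx.symm, hfa1 x]
        rfl
      have hD1 : ∀ i ∈ D, ∀ j ∈ D, i = j := by
        intro i hi j hj
        by_contra hij
        have hrange : ∀ x, φ x ∈ (f a).range := by
          intro x
          obtain ⟨y, rfl⟩ := hFsurj x
          rw [hφF]
          exact ⟨y, rfl⟩
        set φ' : (∀ i : ↥s, Q i) →* ↥(f a).range := φ.codRestrict (f a).range hrange with hφ'def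
        have hφ'surj : Function.Surjective φ' := by
          rintro ⟨z, y, rfl⟩
          exact ⟨F y, Subtype.ext (hφF y)⟩
        have hfacN : ∀ k : ↥s, (MonoidHom.mulSingle Q k).range.Normal := by
          intro k
          constructor
          rintro _ ⟨u, rfl⟩ g
          refine ⟨g k * u * (g k)⁻¹, ?_⟩
          funext j
          by_cases hj : j = k
          · subst hj; simp
          · simp [Pi.mulSingle_eq_of_ne hj]
        have hIm : ∀ k : ↥s, k ∈ D → Subgroup.map φ' (MonoidHom.mulSingle Q k).range = ⊤ := by
          intro k hk
          have hnorm : (Subgroup.map φ' (MonoidHom.mulSingle Q k).range).Normal :=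
            (hfacN k).map φ' hφ'surj
          rcases hsa.eq_bot_or_eq_top_of_normal _ hnorm with hb | ht
          · exfalso
            have hnt : Nontrivial (Q k) :=
              (hsimple k.val (Finset.mem_insert_of_mem k.property)).toNontrivial
            obtain ⟨u, hu⟩ := exists_ne (1 : Q k)
            have hmem : φ' (Pi.mulSingle k u) ∈ Subgroup.map φ' (MonoidHom.mulSingle Q k).range :=
              ⟨Pi.mulSingle k u, ⟨u, rfl⟩, rfl⟩
            rw [hb, Subgroup.mem_bot] at hmem
            have hker1 : Pi.mulSingle k u ∈ φ.ker := by
              rw [MonoidHom.mem_ker]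
              exact congrArg Subtype.val hmem
            have h2 := hk _ hker1
            rw [Pi.mulSingle_eq_same] at h2
            exact hu h2
          · exact ht
        obtain ⟨v, w, hvw⟩ := hna a (Finset.mem_insert_self a s)
        apply hvw
        have hv : v ∈ Subgroup.map φ' (MonoidHom.mulSingle Q i).range := by
          rw [hIm i hi]; exact Subgroup.mem_top v
        have hw : w ∈ Subgroup.map φ' (MonoidHom.mulSingle Q j).range := by
          rw [hIm j hj]; exact Subgroup.mem_top w
        obtain ⟨_, ⟨u₁, rfl⟩, rfl⟩ := hv
        obtain ⟨_, ⟨u₂, rfl⟩, rfl⟩ := hw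
        rw [← map_mul, ← map_mul]
        congr 1
        exact (Pi.mulSingle_commute hij u₁ u₂).eq
      obtain ⟨i₀, hi₀⟩ := hDne
      have hkereq : (f a).ker = (f i₀.val).ker := by
        ext x
        constructor
        · intro hx
          have hFx : F x ∈ φ.ker := by
            rw [MonoidHom.mem_ker, hφF]
            exact hx
          have h1 := hi₀ _ hFx
          rw [MonoidHom.mem_ker]
          have h2 := congrArg Subtype.val h1
          rw [hFapp] at h2
          exact h2
        · intro hx
          have hFx : F x ∈ φ.ker := by
            apply hkerφmem
            intro k hk
            have hki : k = i₀ := hD1 k hk i₀ hi₀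
            subst hki
            apply Subtype.ext
            rw [hFapp]
            exact hx
          rw [MonoidHom.mem_ker, ← hφF x]
          exact hFx
      have hne : a ≠ i₀.val := by
        intro h
        apply ha
        rw [h]
        exact i₀.property
      exact hker a (Finset.mem_insert_self a s) i₀.val
        (Finset.mem_insert_of_mem i₀.property) hne hkereq
    · -- top case: extend
      obtain ⟨h₀, hh₀⟩ := IH hsimple' hna' hker' t
      set u : ↥(f a).range := t a * ((f a).rangeRestrict h₀)⁻¹ with hu
      have humem : u ∈ Ka := by rw [htop]; exact Subgroup.mem_top u
      obtain ⟨k, hkK, hk⟩ := humem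
      refine ⟨k * h₀, ?_⟩
      intro i hi
      rcases Finset.mem_insert.mp hi with rfl | hi'
      · have h1 : f i k = (u : P i) := by
          rw [← hk]; rfl
        rw [map_mul, h1, hu]
        push_cast
        have h2 : ((f i).rangeRestrict h₀ : P i) = f i h₀ := rfl
        rw [h2]
        group
      · rw [map_mul]
        have h1 : f i k = 1 := hKle i hi' hkK
        rw [h1, one_mul]
        exact hh₀ i hi'


end ProductLemmas

section BlockAux

variable {X : Type*}

lemma perm_image_mul (σ τ : Equiv.Perm X) (B : Set X) :
    (σ * τ) '' B = σ '' (τ '' B) := by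
  rw [← Set.image_comp]; rfl

lemma perm_image_inv_image (g : Equiv.Perm X) (B : Set X) :
    g '' ((g⁻¹ : Equiv.Perm X) '' B) = B := by
  ext x
  simp only [Set.mem_image]
  constructor
  · rintro ⟨y, ⟨z, hz, rfl⟩, rfl⟩
    simpa using hz
  · intro hx
    exact ⟨g⁻¹ x, ⟨x, hx, rfl⟩, by simp⟩

lemma mem_FixBlocks {G : Subgroup (Equiv.Perm X)} {𝓑 : Set (Set X)} {g : Equiv.Perm X} :
    g ∈ FixBlocks G 𝓑 ↔ g ∈ G ∧ ∀ B ∈ 𝓑, g '' B = B := by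
  unfold FixBlocks
  rw [Subgroup.mem_inf]
  apply and_congr Iff.rfl
  constructor
  · intro h B hB
    have h1 : g ∈ ⨅ B ∈ 𝓑, MulAction.stabilizer (Equiv.Perm X) B := h
    rw [Subgroup.mem_iInf] at h1
    have h2 := h1 B
    rw [Subgroup.mem_iInf] at h2
    exact mem_stab_iff.mp (h2 hB)
  · intro h
    rw [Subgroup.mem_iInf]
    intro B
    rw [Subgroup.mem_iInf]
    intro hB
    exact mem_stab_iff.mpr (h B hB)

lemma FixBlocks_le_stab {G : Subgroup (Equiv.Perm X)} {𝓑 : Set (Set X)} {B : Set X}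
    (hB : B ∈ 𝓑) : FixBlocks G 𝓑 ≤ MulAction.stabilizer (Equiv.Perm X) B := by
  intro g hg
  exact mem_stab_iff.mpr ((mem_FixBlocks.mp hg).2 B hB)

lemma FixBlocks_normal {G : Subgroup (Equiv.Perm X)} {𝓑 : Set (Set X)}
    (h𝓑 : ∀ g ∈ G, ∀ B ∈ 𝓑, (g : Equiv.Perm X) '' B ∈ 𝓑)
    (h𝓑u : ∀ x : X, ∃! B : Set X, B ∈ 𝓑 ∧ x ∈ B) :
    ∀ g ∈ G, ∀ n ∈ FixBlocks G 𝓑, g * n * g⁻¹ ∈ FixBlocks G 𝓑 := by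
  intro g hg n hn
  obtain ⟨hnG, hnB⟩ := mem_FixBlocks.mp hn
  rw [mem_FixBlocks]
  constructor
  · exact G.mul_mem (G.mul_mem hg hnG) (G.inv_mem hg)
  · intro B hB
    have h1 : (g⁻¹ : Equiv.Perm X) '' B ∈ 𝓑 := h𝓑 g⁻¹ (G.inv_mem hg) B hB
    rw [perm_image_mul, perm_image_mul, hnB _ h1, perm_image_inv_image]

/-- `G` acts transitively on the blocks. -/
lemma blocks_transitive {G : Subgroup (Equiv.Perm X)} {𝓑 : Set (Set X)}
    (hG : SubTrans G) (h𝓑 : IsBlockSystem G 𝓑) {B₀ B : Set X} (hB₀ : B₀ ∈ 𝓑) (hB : B ∈ 𝓑) :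
    ∃ g ∈ G, g '' B₀ = B := by
  obtain ⟨x, hx⟩ := h𝓑.1 B₀ hB₀
  obtain ⟨y, hy⟩ := h𝓑.1 B hB
  obtain ⟨g, hgG, hgxy⟩ := hG x y
  refine ⟨g, hgG, ?_⟩
  have h1 : g '' B₀ ∈ 𝓑 := h𝓑.2.2 g hgG B₀ hB₀
  have h2 : y ∈ g '' B₀ := ⟨x, hx, hgxy⟩
  obtain ⟨Bu, _, hBu⟩ := h𝓑.2.1 y
  rw [hBu _ ⟨h1, h2⟩, hBu _ ⟨hB, hy⟩]

lemma InducedSub_mono {G' Y : Type*} [Group G'] [MulAction G' Y] {H K : Subgroup G'}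
    (h : H ≤ K) (A : Set Y) : InducedSub H A ≤ InducedSub K A :=
  Subgroup.map_mono (Subgroup.comap_mono h)

lemma InducedSub_conj {W : Subgroup (Equiv.Perm X)} {A : Set X} {d : Equiv.Perm X}
    (hd : d ∈ MulAction.stabilizer (Equiv.Perm X) A) :
    InducedSub (ConjSub d W) A
      = ConjSub (restrictHom (G := Equiv.Perm X) A ⟨d, hd⟩) (InducedSub W A) := by
  have key : Subgroup.comap (MulAction.stabilizer (Equiv.Perm X) A).subtype (ConjSub d W)
      = ConjSub (⟨d, hd⟩ : ↥(MulAction.stabilizer (Equiv.Perm X) A))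
        (Subgroup.comap (MulAction.stabilizer (Equiv.Perm X) A).subtype W) := by
    ext x
    rw [Subgroup.mem_comap, mem_ConjSub, mem_ConjSub]
    constructor
    · rintro ⟨w, hw, hx⟩
      have hx' : (x : Equiv.Perm X) = d⁻¹ * w * d := hx
      have hwstab : w ∈ MulAction.stabilizer (Equiv.Perm X) A := by
        have : w = d * (x : Equiv.Perm X) * d⁻¹ := by
          rw [hx']; group
        rw [this]
        exact mul_mem (mul_mem hd x.property) (inv_mem hd)
      refine ⟨⟨w, hwstab⟩, by rwa [Subgroup.mem_comap], ?_⟩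
      apply Subtype.ext
      exact hx
    · rintro ⟨w, hw, rfl⟩
      exact ⟨(w : Equiv.Perm X), hw, rfl⟩
  unfold InducedSub
  rw [key, map_ConjSub]

/-- Orbits are determined blockwise. -/
lemma suborbits_eq_of_blockwise {𝓑 : Set (Set X)}
    (h𝓑u : ∀ x : X, ∃! B : Set X, B ∈ 𝓑 ∧ x ∈ B)
    {W₁ W₂ : Subgroup (Equiv.Perm X)}
    (hW₁ : ∀ B ∈ 𝓑, W₁ ≤ MulAction.stabilizer (Equiv.Perm X) B)
    (hW₂ : ∀ B ∈ 𝓑, W₂ ≤ MulAction.stabilizer (Equiv.Perm X) B)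
    (h : ∀ B ∈ 𝓑, InducedSub W₁ B = InducedSub W₂ B) :
    SubOrbits W₁ = SubOrbits W₂ := by
  have key : ∀ (W₁' W₂' : Subgroup (Equiv.Perm X)),
      (∀ B ∈ 𝓑, W₁' ≤ MulAction.stabilizer (Equiv.Perm X) B) →
      (∀ B ∈ 𝓑, InducedSub W₁' B ≤ InducedSub W₂' B) →
      ∀ x : X, SubOrbit W₁' x ⊆ SubOrbit W₂' x := by
    intro W₁' W₂' hst hle x y hy
    obtain ⟨w, hw, rfl⟩ := hy
    obtain ⟨B, ⟨hB, hxB⟩, _⟩ := h𝓑u x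
    have hwstab : w ∈ MulAction.stabilizer (Equiv.Perm X) B := hst B hB hw
    have hres : restrictHom (G := Equiv.Perm X) B ⟨w, hwstab⟩ ∈ InducedSub W₁' B :=
      ⟨⟨w, hwstab⟩, hw, rfl⟩
    obtain ⟨g, hgW, hg⟩ := mem_InducedSub.mp (hle B hB hres)
    refine ⟨(g : Equiv.Perm X), hgW, ?_⟩
    have := congrArg (fun p => ((p ⟨x, hxB⟩ : ↥B) : X)) hg
    simpa [restrictHom_apply'] using this
  unfold SubOrbits
  have : SubOrbit W₁ = SubOrbit W₂ := by
    funext x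
    apply le_antisymm
    · exact key W₁ W₂ hW₁ (fun B hB => (h B hB).le) x
    · exact key W₂ W₁ hW₂ (fun B hB => (h B hB).ge) x
  rw [this]

end BlockAux

section IndSocle

variable {X : Type*}

lemma inclusion_restrict_eq {S : Subgroup (Equiv.Perm X)} {A : Set X}
    (hS : S ≤ MulAction.stabilizer (Equiv.Perm X) A) (y : ↥S) :
    ((restrictHom (G := Equiv.Perm X) A).comp (Subgroup.inclusion hS)) y
      = restrictHom (G := Equiv.Perm X) A ⟨(y : Equiv.Perm X), hS y.property⟩ := rfl

lemma ind_eq_map {S W : Subgroup (Equiv.Perm X)} {A : Set X}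
    (hS : S ≤ MulAction.stabilizer (Equiv.Perm X) A) (hW : W ≤ S) :
    Subgroup.map ((restrictHom (G := Equiv.Perm X) A).comp (Subgroup.inclusion hS))
      (W.subgroupOf S) = InducedSub W A := by
  ext x
  rw [Subgroup.mem_map, mem_InducedSub]
  constructor
  · rintro ⟨y, hy, rfl⟩
    exact ⟨⟨(y : Equiv.Perm X), hS y.property⟩, hy, rfl⟩
  · rintro ⟨g, hgW, rfl⟩
    refine ⟨⟨(g : Equiv.Perm X), hW hgW⟩, ?_, ?_⟩
    · rwa [Subgroup.mem_subgroupOf]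
    · rw [inclusion_restrict_eq]

lemma range_eq_InducedSub {S : Subgroup (Equiv.Perm X)} {A : Set X}
    (hS : S ≤ MulAction.stabilizer (Equiv.Perm X) A) :
    ((restrictHom (G := Equiv.Perm X) A).comp (Subgroup.inclusion hS)).range
      = InducedSub S A := by
  rw [← ind_eq_map hS le_rfl, Subgroup.subgroupOf_self, MonoidHom.range_eq_map]

lemma InducedSub_iSup {ι : Sort*} (M : ι → Subgroup (Equiv.Perm X)) (A : Set X)
    (hM : ∀ i, M i ≤ MulAction.stabilizer (Equiv.Perm X) A) :
    InducedSub (⨆ i, M i) A = ⨆ i, InducedSub (M i) A := by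
  unfold InducedSub
  have hcom : Subgroup.comap (MulAction.stabilizer (Equiv.Perm X) A).subtype (⨆ i, M i)
      = ⨆ i, Subgroup.comap (MulAction.stabilizer (Equiv.Perm X) A).subtype (M i) := by
    apply Subgroup.map_injective (MulAction.stabilizer (Equiv.Perm X) A).subtype_injective
    rw [Subgroup.map_comap_eq, (Subgroup.gc_map_comap _).l_iSup, Subgroup.range_subtype]
    have h2 : ∀ i, Subgroup.map (MulAction.stabilizer (Equiv.Perm X) A).subtype
        (Subgroup.comap (MulAction.stabilizer (Equiv.Perm X) A).subtype (M i)) = M i := by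
      intro i
      rw [Subgroup.map_comap_eq, Subgroup.range_subtype]
      exact inf_eq_right.mpr (hM i)
    rw [inf_eq_right.mpr (iSup_le hM)]
    exact (iSup_congr h2).symm
  rw [hcom, (Subgroup.gc_map_comap _).l_iSup]

lemma InducedSub_normalIn {N' W : Subgroup (Equiv.Perm X)} {A : Set X}
    (hN : N' ≤ MulAction.stabilizer (Equiv.Perm X) A) (h : NormalIn N' W) :
    NormalIn (InducedSub N' A) (InducedSub W A) := by
  constructor
  · exact InducedSub_mono h.1 A
  · intro a ha x hx
    obtain ⟨n, hnN, rfl⟩ := mem_InducedSub.mp ha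
    obtain ⟨w, hwW, rfl⟩ := mem_InducedSub.mp hx
    rw [mem_InducedSub]
    refine ⟨n * w * n⁻¹, ?_, ?_⟩
    · exact h.2 (n : Equiv.Perm X) hnN (w : Equiv.Perm X) hwW
    · rw [map_mul, map_mul, map_inv]

/-- The "pullback" trick: a minimal normal-in subgroup restricts into the socle. -/
lemma ptrick [Finite X] {N' M : Subgroup (Equiv.Perm X)} {A : Set X}
    (hN : N' ≤ MulAction.stabilizer (Equiv.Perm X) A)
    (hsimple : IsSimpleGroup ↥(SocleIn (InducedSub N' A)))
    (hM : MinimalNormalIn N' M) :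
    InducedSub M A ≤ SocleIn (InducedSub N' A) := by
  classical
  set T := SocleIn (InducedSub N' A) with hT
  set Pb : Subgroup (Equiv.Perm X) :=
    Subgroup.map (MulAction.stabilizer (Equiv.Perm X) A).subtype
      (Subgroup.comap (restrictHom (G := Equiv.Perm X) A) T) with hPb
  have hmemPb : ∀ x : Equiv.Perm X, x ∈ Pb ↔
      ∃ h : x ∈ MulAction.stabilizer (Equiv.Perm X) A,
        restrictHom (G := Equiv.Perm X) A ⟨x, h⟩ ∈ T := by
    intro x
    rw [hPb]
    constructor
    · rintro ⟨y, hy, rfl⟩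
      exact ⟨y.property, hy⟩
    · rintro ⟨h, hmem⟩
      exact ⟨⟨x, h⟩, hmem, rfl⟩
  have hTnorm : NormalIn (InducedSub N' A) T := socleIn_normalIn _
  have hP'norm : NormalIn N' (M ⊓ Pb) := by
    constructor
    · exact inf_le_left.trans hM.1.1
    · intro n hnN x hx
      obtain ⟨hxM, hxPb⟩ := Subgroup.mem_inf.mp hx
      rw [Subgroup.mem_inf]
      refine ⟨hM.1.2 n hnN x hxM, ?_⟩
      obtain ⟨hxstab, hxres⟩ := (hmemPb x).mp hxPb
      have hnstab : n ∈ MulAction.stabilizer (Equiv.Perm X) A := hN hnN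
      have hstab2 : n * x * n⁻¹ ∈ MulAction.stabilizer (Equiv.Perm X) A :=
        mul_mem (mul_mem hnstab hxstab) (inv_mem hnstab)
      refine (hmemPb _).mpr ⟨hstab2, ?_⟩
      have heq : (⟨n * x * n⁻¹, hstab2⟩ : ↥(MulAction.stabilizer (Equiv.Perm X) A))
          = ⟨n, hnstab⟩ * ⟨x, hxstab⟩ * (⟨n, hnstab⟩ : ↥(MulAction.stabilizer (Equiv.Perm X) A))⁻¹ := by
        apply Subtype.ext
        rfl
      rw [heq, map_mul, map_mul, map_inv]
      apply hTnorm.2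
      · exact ⟨⟨n, hnstab⟩, hnN, rfl⟩
      · exact hxres
  rcases hM.2.2 (M ⊓ Pb) hP'norm inf_le_left with hbot | heq
  · by_cases hMA : InducedSub M A = ⊥
    · rw [hMA]; exact bot_le
    · exfalso
      have h1 : NormalIn (InducedSub N' A) (InducedSub M A) := InducedSub_normalIn hN hM.1
      obtain ⟨Mm, hMm, hMmle⟩ := exists_minimalNormalIn (InducedSub N' A) (InducedSub M A) h1 hMA
      have hMmT : Mm = T := minimalNormal_eq_socle hsimple hMm
      have hTle : T ≤ InducedSub M A := hMmT ▸ hMmle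
      obtain ⟨t, htne⟩ := exists_ne (1 : ↥T)
      have htT : (t : Equiv.Perm ↥A) ∈ T := t.property
      obtain ⟨m, hmM, hmres⟩ := mem_InducedSub.mp (hTle htT)
      have hmPb : (m : Equiv.Perm X) ∈ Pb := (hmemPb _).mpr ⟨m.property, by rw [hmres]; exact htT⟩
      have : (m : Equiv.Perm X) ∈ M ⊓ Pb := Subgroup.mem_inf.mpr ⟨hmM, hmPb⟩
      rw [hbot, Subgroup.mem_bot] at this
      apply htne
      apply Subtype.ext
      rw [← hmres]
      have : m = (1 : ↥(MulAction.stabilizer (Equiv.Perm X) A)) := Subtype.ext this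
      rw [this, map_one]
      rfl
  · intro x hx
    obtain ⟨m, hmM, rfl⟩ := mem_InducedSub.mp hx
    have hmPb : (m : Equiv.Perm X) ∈ Pb := by
      have : M ≤ Pb := by rw [← heq]; exact inf_le_right
      exact this hmM
    obtain ⟨hstab, hres⟩ := (hmemPb _).mp hmPb
    have : (⟨(m : Equiv.Perm X), hstab⟩ : ↥(MulAction.stabilizer (Equiv.Perm X) A)) = m :=
      Subtype.ext rfl
    rwa [this] at hres

lemma socle_push_le [Finite X] {N' : Subgroup (Equiv.Perm X)} {A : Set X}
    (hN : N' ≤ MulAction.stabilizer (Equiv.Perm X) A)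
    (hsimple : IsSimpleGroup ↥(SocleIn (InducedSub N' A))) :
    InducedSub (SocleIn N') A ≤ SocleIn (InducedSub N' A) := by
  have hdef : SocleIn N'
      = ⨆ M : Subgroup (Equiv.Perm X), ⨆ _ : MinimalNormalIn N' M, M := rfl
  rw [hdef, InducedSub_iSup _ A (fun M => iSup_le (fun h => h.1.1.trans hN))]
  apply iSup_le
  intro M
  rw [InducedSub_iSup _ A (fun h => h.1.1.trans hN)]
  apply iSup_le
  intro hMm
  exact ptrick hN hsimple hMm

lemma socle_push_eq [Finite X] {N' : Subgroup (Equiv.Perm X)} {A : Set X}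
    (hN : N' ≤ MulAction.stabilizer (Equiv.Perm X) A)
    (hsimple : IsSimpleGroup ↥(SocleIn (InducedSub N' A)))
    (hne : InducedSub (SocleIn N') A ≠ ⊥) :
    InducedSub (SocleIn N') A = SocleIn (InducedSub N' A) := by
  apply le_antisymm (socle_push_le hN hsimple)
  have hnormal : NormalIn (InducedSub N' A) (InducedSub (SocleIn N') A) :=
    InducedSub_normalIn hN (socleIn_normalIn N')
  obtain ⟨Mm, hMm, hle⟩ := exists_minimalNormalIn (InducedSub N' A) _ hnormal hne
  rw [← minimalNormal_eq_socle hsimple hMm]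
  exact hle

end IndSocle

section Transport

variable {X : Type*}

/-- The bijection between a block and its image. -/
def blockEquiv (g : Equiv.Perm X) (A : Set X) : ↥A ≃ ↥(g '' A) where
  toFun x := ⟨g x, ⟨x, x.property, rfl⟩⟩
  invFun y := ⟨g⁻¹ y, by
    obtain ⟨x, hx, hgx⟩ := y.property
    have : (g⁻¹ : Equiv.Perm X) (y : X) = x := by rw [← hgx]; simp
    rw [this]; exact hx⟩
  left_inv x := by apply Subtype.ext; simp
  right_inv y := by apply Subtype.ext; simp

/-- `permCongr` as a `MulEquiv`. -/
def permCongrMul {α β : Type*} (e : α ≃ β) : Equiv.Perm α ≃* Equiv.Perm β :=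
  { Equiv.permCongr e with
    map_mul' := by
      intro f g
      ext b
      simp [Equiv.permCongr] }

lemma permCongrMul_apply {α β : Type*} (e : α ≃ β) (f : Equiv.Perm α) (b : β) :
    permCongrMul e f b = e (f (e.symm b)) := rfl

lemma perm_inv_image_image (g : Equiv.Perm X) (B : Set X) :
    (g⁻¹ : Equiv.Perm X) '' (g '' B) = B := by
  have := perm_image_inv_image g⁻¹ B
  simpa using this

lemma stab_conj {g n : Equiv.Perm X} {A : Set X}
    (hn : n ∈ MulAction.stabilizer (Equiv.Perm X) A) :
    g * n * g⁻¹ ∈ MulAction.stabilizer (Equiv.Perm X) (g '' A) := by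
  rw [mem_stab_iff] at hn ⊢
  rw [perm_image_mul, perm_image_mul, perm_inv_image_image, hn]

lemma permCongr_restrict (g : Equiv.Perm X) (A : Set X) (n : Equiv.Perm X)
    (hn : n ∈ MulAction.stabilizer (Equiv.Perm X) A) :
    (permCongrMul (blockEquiv g A)) (restrictHom (G := Equiv.Perm X) A ⟨n, hn⟩)
      = restrictHom (G := Equiv.Perm X) (g '' A) ⟨g * n * g⁻¹, stab_conj hn⟩ := by
  ext y
  show ((permCongrMul (blockEquiv g A) (restrictHom (G := Equiv.Perm X) A ⟨n, hn⟩) y : ↥(g '' A)) : X)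
    = ((restrictHom (G := Equiv.Perm X) (g '' A) ⟨g * n * g⁻¹, stab_conj hn⟩ y : ↥(g '' A)) : X)
  rw [restrictHom_apply', permCongrMul_apply]
  show g ((restrictHom (G := Equiv.Perm X) A ⟨n, hn⟩ ((blockEquiv g A).symm y) : ↥A) : X) = _
  rw [restrictHom_apply']
  simp [blockEquiv]

lemma map_permCongr_InducedSub (g : Equiv.Perm X) (A : Set X) (W : Subgroup (Equiv.Perm X)) :
    Subgroup.map (permCongrMul (blockEquiv g A)).toMonoidHom (InducedSub W A)
      = InducedSub (ConjSub g⁻¹ W) (g '' A) := by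
  ext x
  rw [Subgroup.mem_map]
  constructor
  · rintro ⟨y, hy, rfl⟩
    obtain ⟨w, hwW, rfl⟩ := mem_InducedSub.mp hy
    rw [mem_InducedSub]
    refine ⟨⟨g * w * g⁻¹, stab_conj w.property⟩, ?_, ?_⟩
    · rw [mem_ConjSub]
      exact ⟨(w : Equiv.Perm X), hwW, by group⟩
    · have := permCongr_restrict g A (w : Equiv.Perm X) w.property
      rw [← this]
      rfl
  · intro hx
    obtain ⟨v, hvC, rfl⟩ := mem_InducedSub.mp hx
    rw [mem_ConjSub] at hvC
    obtain ⟨w, hwW, hveq⟩ := hvC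
    have hveq' : (v : Equiv.Perm X) = g * w * g⁻¹ := by rw [hveq]; group
    have hwstab : w ∈ MulAction.stabilizer (Equiv.Perm X) A := by
      have h1 : (g⁻¹ : Equiv.Perm X) * (v : Equiv.Perm X) * (g⁻¹)⁻¹
          ∈ MulAction.stabilizer (Equiv.Perm X) ((g⁻¹ : Equiv.Perm X) '' (g '' A)) :=
        stab_conj v.property
      have h2 : (g⁻¹ : Equiv.Perm X) '' (g '' A) = A := by
        rw [← perm_image_mul]
        simp [Set.image_id']
      have h3 : (g⁻¹ : Equiv.Perm X) * (v : Equiv.Perm X) * (g⁻¹)⁻¹ = w := by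
        rw [hveq']; group
      rwa [h2, h3] at h1
    refine ⟨restrictHom (G := Equiv.Perm X) A ⟨w, hwstab⟩, ⟨⟨w, hwstab⟩, hwW, rfl⟩, ?_⟩
    show (permCongrMul (blockEquiv g A)) (restrictHom (G := Equiv.Perm X) A ⟨w, hwstab⟩)
      = restrictHom (G := Equiv.Perm X) ((g : Equiv.Perm X) '' A) v
    rw [permCongr_restrict g A w hwstab]
    congr 1
    apply Subtype.ext
    exact hveq'.symm

variable {P P' : Type*} [Group P] [Group P']

lemma map_normalIn (φ : P ≃* P') {A M : Subgroup P} (h : NormalIn A M) :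
    NormalIn (Subgroup.map φ.toMonoidHom A) (Subgroup.map φ.toMonoidHom M) := by
  constructor
  · exact Subgroup.map_mono h.1
  · rintro _ ⟨a, haA, rfl⟩ _ ⟨m, hmM, rfl⟩
    refine ⟨a * m * a⁻¹, h.2 a haA m hmM, by rw [map_mul, map_mul, map_inv]⟩

lemma map_map_symm (φ : P ≃* P') (K : Subgroup P') :
    Subgroup.map φ.toMonoidHom (Subgroup.map φ.symm.toMonoidHom K) = K := by
  rw [Subgroup.map_map]
  ext x
  constructor
  · rintro ⟨y, hy, rfl⟩
    simpa using hy
  · intro hx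
    exact ⟨x, hx, by simp⟩

lemma map_symm_map (φ : P ≃* P') (K : Subgroup P) :
    Subgroup.map φ.symm.toMonoidHom (Subgroup.map φ.toMonoidHom K) = K := by
  rw [Subgroup.map_map]
  ext x
  constructor
  · rintro ⟨y, hy, rfl⟩
    simpa using hy
  · intro hx
    exact ⟨x, hx, by simp⟩

lemma map_minimalNormalIn (φ : P ≃* P') {A M : Subgroup P} (h : MinimalNormalIn A M) :
    MinimalNormalIn (Subgroup.map φ.toMonoidHom A) (Subgroup.map φ.toMonoidHom M) := by
  refine ⟨map_normalIn φ h.1, ?_, ?_⟩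
  · rw [Ne, Subgroup.map_eq_bot_iff_of_injective _ φ.injective]
    exact h.2.1
  · intro M' hM' hle
    have h1 : NormalIn A (Subgroup.map φ.symm.toMonoidHom M') := by
      have := map_normalIn φ.symm hM'
      rwa [map_symm_map] at this
    have h2 : Subgroup.map φ.symm.toMonoidHom M' ≤ M := by
      have := Subgroup.map_mono (f := φ.symm.toMonoidHom) hle
      rwa [map_symm_map] at this
    rcases h.2.2 _ h1 h2 with hb | he
    · left
      have := congrArg (Subgroup.map φ.toMonoidHom) hb
      rwa [map_map_symm, Subgroup.map_bot] at this
    · right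
      have := congrArg (Subgroup.map φ.toMonoidHom) he
      rwa [map_map_symm] at this

lemma map_socleIn (φ : P ≃* P') (A : Subgroup P) :
    Subgroup.map φ.toMonoidHom (SocleIn A) = SocleIn (Subgroup.map φ.toMonoidHom A) := by
  unfold SocleIn
  rw [show (⨆ N ∈ {N : Subgroup P | MinimalNormalIn A N}, N)
      = ⨆ N : Subgroup P, ⨆ _ : MinimalNormalIn A N, N from rfl]
  rw [show (⨆ N ∈ {N : Subgroup P' | MinimalNormalIn (Subgroup.map φ.toMonoidHom A) N}, N)
      = ⨆ N : Subgroup P', ⨆ _ : MinimalNormalIn (Subgroup.map φ.toMonoidHom A) N, N from rfl]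
  rw [(Subgroup.gc_map_comap φ.toMonoidHom).l_iSup]
  apply le_antisymm
  · apply iSup_le
    intro M
    rw [(Subgroup.gc_map_comap φ.toMonoidHom).l_iSup]
    apply iSup_le
    intro hM
    exact le_iSup₂ (f := fun (N : Subgroup P') (_ : MinimalNormalIn (Subgroup.map φ.toMonoidHom A) N) => N)
      (Subgroup.map φ.toMonoidHom M) (map_minimalNormalIn φ hM)
  · apply iSup_le
    intro M'
    apply iSup_le
    intro hM'
    have h1 : MinimalNormalIn A (Subgroup.map φ.symm.toMonoidHom M') := by
      have := map_minimalNormalIn φ.symm hM'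
      rwa [map_symm_map] at this
    have h2 : M' = Subgroup.map φ.toMonoidHom (Subgroup.map φ.symm.toMonoidHom M') :=
      (map_map_symm φ M').symm
    rw [h2]
    calc Subgroup.map φ.toMonoidHom (Subgroup.map φ.symm.toMonoidHom M')
        ≤ Subgroup.map φ.toMonoidHom (⨆ N : Subgroup P, ⨆ _ : MinimalNormalIn A N, N) := by
          apply Subgroup.map_mono
          exact le_iSup₂ (f := fun (N : Subgroup P) (_ : MinimalNormalIn A N) => N) _ h1
      _ = _ := by rw [(Subgroup.gc_map_comap φ.toMonoidHom).l_iSup]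

/-- Transport `IsSimpleGroup` along a `MulEquiv`. -/
lemma isSimpleGroup_mulEquiv {G₁ G₂ : Type*} [Group G₁] [Group G₂] (e : G₁ ≃* G₂)
    (h : IsSimpleGroup G₁) : IsSimpleGroup G₂ := by
  haveI : Nontrivial G₂ := by
    obtain ⟨a, b, hab⟩ := h.exists_pair_ne
    exact ⟨⟨e a, e b, fun hc => hab (e.injective hc)⟩⟩
  haveI := h
  exact IsSimpleGroup.isSimpleGroup_of_surjective (G := G₁) e.toMonoidHom e.surjective

lemma semiregular_map_permCongr {α β : Type*} (e : α ≃ β) {W : Subgroup (Equiv.Perm α)}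
    (h : SubSemiregular W) :
    SubSemiregular (Subgroup.map (permCongrMul e).toMonoidHom W) := by
  rintro _ ⟨w, hwW, rfl⟩ ⟨b, hb⟩
  have hb' : (permCongrMul e) w b = b := hb
  have hfix : w (e.symm b) = e.symm b := by
    have := congrArg e.symm hb'
    rw [permCongrMul_apply] at this
    simpa using this
  rw [h w hwW ⟨e.symm b, hfix⟩, map_one]

end Transport

section RestrictIso

variable {X : Type*}

lemma ConjSub_one {P : Type*} [Group P] (K : Subgroup P) : ConjSub (1 : P) K = K := by
  ext x
  rw [mem_ConjSub]
  constructor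
  · rintro ⟨h, hh, rfl⟩; simpa using hh
  · intro hx; exact ⟨x, hx, by simp⟩

lemma ConjSub_comp {P : Type*} [Group P] (x y : P) (K : Subgroup P) :
    ConjSub x (ConjSub y K) = ConjSub (y * x) K := by
  ext z
  rw [mem_ConjSub]
  constructor
  · rintro ⟨h, hh, rfl⟩
    rw [mem_ConjSub] at hh
    obtain ⟨k, hk, rfl⟩ := hh
    exact (mem_ConjSub).mpr ⟨k, hk, by group⟩
  · intro hz
    rw [mem_ConjSub] at hz
    obtain ⟨k, hk, rfl⟩ := hz
    exact ⟨y⁻¹ * k * y, (mem_ConjSub).mpr ⟨k, hk, rfl⟩, by group⟩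

lemma ConjSub_bot {P : Type*} [Group P] (x : P) : ConjSub x (⊥ : Subgroup P) = ⊥ := by
  ext z
  rw [mem_ConjSub]
  simp

lemma le_ConjSub_bot {P : Type*} [Group P] {x : P} {K : Subgroup P} (h : K = ⊥) :
    ConjSub x K = ⊥ := by rw [h]; exact ConjSub_bot x

/-- Restriction to a nonempty invariant set is injective on a semiregular group. -/
lemma restrict_iso {W : Subgroup (Equiv.Perm X)} {A : Set X}
    (hWst : W ≤ MulAction.stabilizer (Equiv.Perm X) A) (hsr : SubSemiregular W)
    (hA : A.Nonempty) : Nonempty (↥W ≃* ↥(InducedSub W A)) := by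
  set f := (restrictHom (G := Equiv.Perm X) A).comp (Subgroup.inclusion hWst) with hf
  have hinj : Function.Injective f := by
    rw [injective_iff_map_eq_one]
    intro w hw
    obtain ⟨a, ha⟩ := hA
    have h1 : f w ⟨a, ha⟩ = ⟨a, ha⟩ := by rw [hw]; rfl
    have h2 : ((f w ⟨a, ha⟩ : ↥A) : X) = (w : Equiv.Perm X) a := by
      rw [hf, inclusion_restrict_eq, restrictHom_apply']
    have h3 : (w : Equiv.Perm X) a = a := by rw [← h2, h1]
    apply Subtype.ext
    exact hsr (w : Equiv.Perm X) w.property ⟨a, h3⟩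
  exact ⟨(MonoidHom.ofInjective hinj).trans (MulEquiv.subgroupCongr (range_eq_InducedSub hWst))⟩

lemma semiregular_InducedSub {W : Subgroup (Equiv.Perm X)} {A : Set X}
    (hsr : SubSemiregular W) : SubSemiregular (InducedSub W A) := by
  intro h hmem hfix
  obtain ⟨w, hwW, rfl⟩ := mem_InducedSub.mp hmem
  obtain ⟨⟨x, hxA⟩, hx⟩ := hfix
  have h1 : (w : Equiv.Perm X) x = x := by
    have h0 := congrArg (fun p : ↥A => (p : X)) hx
    simp only at h0
    rwa [restrictHom_apply'] at h0
  have h2 : (w : Equiv.Perm X) = 1 := hsr _ hwW ⟨x, h1⟩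
  have h3 : w = (1 : ↥(MulAction.stabilizer (Equiv.Perm X) A)) := Subtype.ext h2
  rw [h3, map_one]

lemma ConjSub_FixBlocks {G : Subgroup (Equiv.Perm X)} {𝓑 : Set (Set X)}
    (h𝓑 : ∀ g ∈ G, ∀ B ∈ 𝓑, (g : Equiv.Perm X) '' B ∈ 𝓑)
    (h𝓑u : ∀ x : X, ∃! B : Set X, B ∈ 𝓑 ∧ x ∈ B)
    {g : Equiv.Perm X} (hg : g ∈ G) : ConjSub g⁻¹ (FixBlocks G 𝓑) = FixBlocks G 𝓑 := by
  have hnormal := FixBlocks_normal h𝓑 h𝓑u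
  ext x
  rw [mem_ConjSub]
  constructor
  · rintro ⟨n, hn, rfl⟩
    simpa using hnormal g hg n hn
  · intro hx
    refine ⟨g⁻¹ * x * g, ?_, by group⟩
    simpa using hnormal g⁻¹ (G.inv_mem hg) x hx

end RestrictIso

section Mega

variable {X : Type*}

lemma permCongrMul_symm {α β : Type*} (e : α ≃ β) :
    (permCongrMul e).symm = permCongrMul e.symm := by
  ext f b
  rfl

/-- The per-block package: simplicity, nonabelianness and the conjugation relation
transported to an arbitrary block. -/
lemma block_package [Finite X] {G : Subgroup (Equiv.Perm X)} {𝓑 : Set (Set X)}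
    (hG : SubTrans G) (h𝓑 : IsBlockSystem G 𝓑)
    {B₀ : Set X} (hB₀ : B₀ ∈ 𝓑)
    (hTsimple : IsSimpleGroup ↥(SocleIn (InducedSub (FixBlocks G 𝓑) B₀)))
    (hTnonab : ∃ a b : ↥(SocleIn (InducedSub (FixBlocks G 𝓑) B₀)), a * b ≠ b * a)
    {U V : Subgroup (Equiv.Perm X)}
    (hU : U ≤ SocleIn (FixBlocks G 𝓑)) (hV : V ≤ SocleIn (FixBlocks G 𝓑))
    (hUs : SubSemiregular U) (hVs : SubSemiregular V)
    (hUV : Nonempty (↥U ≃* ↥V))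
    (hconj : ∀ W₁ W₂ : Subgroup (Equiv.Perm ↥B₀),
      W₁ ≤ SocleIn (InducedSub (FixBlocks G 𝓑) B₀) →
      W₂ ≤ SocleIn (InducedSub (FixBlocks G 𝓑) B₀) →
      SubSemiregular W₁ → SubSemiregular W₂ →
      Nonempty (↥W₁ ≃* ↥(InducedSub U B₀)) → Nonempty (↥W₂ ≃* ↥(InducedSub U B₀)) →
      ∃ t ∈ SocleIn (InducedSub (FixBlocks G 𝓑) B₀), W₂ = ConjSub t W₁)
    {B : Set X} (hB : B ∈ 𝓑) :
    IsSimpleGroup ↥(SocleIn (InducedSub (FixBlocks G 𝓑) B)) ∧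
    (∃ a b : ↥(SocleIn (InducedSub (FixBlocks G 𝓑) B)), a * b ≠ b * a) ∧
    (∃ t ∈ SocleIn (InducedSub (FixBlocks G 𝓑) B),
      InducedSub V B = ConjSub t (InducedSub U B)) := by
  classical
  set N := FixBlocks G 𝓑 with hNdef
  have hNstab : ∀ {C : Set X}, C ∈ 𝓑 → N ≤ MulAction.stabilizer (Equiv.Perm X) C :=
    fun hC => FixBlocks_le_stab hC
  have hUstab : ∀ {C : Set X}, C ∈ 𝓑 → U ≤ MulAction.stabilizer (Equiv.Perm X) C :=
    fun hC => hU.trans ((SocleIn_le N).trans (hNstab hC))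
  have hVstab : ∀ {C : Set X}, C ∈ 𝓑 → V ≤ MulAction.stabilizer (Equiv.Perm X) C :=
    fun hC => hV.trans ((SocleIn_le N).trans (hNstab hC))
  obtain ⟨g, hgG, hgB⟩ := blocks_transitive hG h𝓑 hB₀ hB
  subst hgB
  set Φ := permCongrMul (blockEquiv g B₀) with hΦdef
  have hmapN : Subgroup.map Φ.toMonoidHom (InducedSub N B₀) = InducedSub N (g '' B₀) := by
    rw [hΦdef, map_permCongr_InducedSub, ConjSub_FixBlocks h𝓑.2.2 h𝓑.2.1 hgG]
  have hmapS : Subgroup.map Φ.toMonoidHom (SocleIn (InducedSub N B₀))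
      = SocleIn (InducedSub N (g '' B₀)) := by
    rw [map_socleIn, hmapN]
  set esoc : ↥(SocleIn (InducedSub N B₀)) ≃* ↥(SocleIn (InducedSub N (g '' B₀))) :=
    (Subgroup.equivMapOfInjective _ Φ.toMonoidHom Φ.injective).trans
      (MulEquiv.subgroupCongr hmapS) with hesoc
  have hsimpleB : IsSimpleGroup ↥(SocleIn (InducedSub N (g '' B₀))) :=
    isSimpleGroup_mulEquiv esoc hTsimple
  have hnonabB : ∃ a b : ↥(SocleIn (InducedSub N (g '' B₀))), a * b ≠ b * a := by
    obtain ⟨a, b, hab⟩ := hTnonab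
    refine ⟨esoc a, esoc b, fun hc => hab ?_⟩
    apply esoc.injective
    rw [map_mul, map_mul, hc]
  refine ⟨hsimpleB, hnonabB, ?_⟩
  -- now the conjugation relation
  have hUB_le : InducedSub U (g '' B₀) ≤ SocleIn (InducedSub N (g '' B₀)) :=
    (InducedSub_mono hU _).trans (socle_push_le (hNstab hB) hsimpleB)
  have hVB_le : InducedSub V (g '' B₀) ≤ SocleIn (InducedSub N (g '' B₀)) :=
    (InducedSub_mono hV _).trans (socle_push_le (hNstab hB) hsimpleB)
  set W₁' := Subgroup.map Φ.symm.toMonoidHom (InducedSub U (g '' B₀)) with hW₁'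
  set W₂' := Subgroup.map Φ.symm.toMonoidHom (InducedSub V (g '' B₀)) with hW₂'
  have hsymm_socle : Subgroup.map Φ.symm.toMonoidHom (SocleIn (InducedSub N (g '' B₀)))
      = SocleIn (InducedSub N B₀) := by
    rw [← hmapS, map_symm_map]
  have hW₁le : W₁' ≤ SocleIn (InducedSub N B₀) := by
    rw [hW₁', ← hsymm_socle]
    exact Subgroup.map_mono hUB_le
  have hW₂le : W₂' ≤ SocleIn (InducedSub N B₀) := by
    rw [hW₂', ← hsymm_socle]
    exact Subgroup.map_mono hVB_le
  have hW₁sr : SubSemiregular W₁' := by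
    rw [hW₁', hΦdef, permCongrMul_symm]
    exact semiregular_map_permCongr _ (semiregular_InducedSub hUs)
  have hW₂sr : SubSemiregular W₂' := by
    rw [hW₂', hΦdef, permCongrMul_symm]
    exact semiregular_map_permCongr _ (semiregular_InducedSub hVs)
  obtain ⟨rIU0⟩ := restrict_iso (hUstab hB₀) hUs (h𝓑.1 B₀ hB₀)
  obtain ⟨rIUB⟩ := restrict_iso (hUstab hB) hUs (h𝓑.1 _ hB)
  obtain ⟨rIVB⟩ := restrict_iso (hVstab hB) hVs (h𝓑.1 _ hB)
  obtain ⟨eUV⟩ := hUV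
  have isoW₁ : Nonempty (↥W₁' ≃* ↥(InducedSub U B₀)) := by
    refine ⟨((Subgroup.equivMapOfInjective _ Φ.symm.toMonoidHom Φ.symm.injective).symm.trans
      (rIUB.symm.trans rIU0))⟩
  have isoW₂ : Nonempty (↥W₂' ≃* ↥(InducedSub U B₀)) := by
    refine ⟨((Subgroup.equivMapOfInjective _ Φ.symm.toMonoidHom Φ.symm.injective).symm.trans
      ((rIVB.symm.trans eUV.symm).trans rIU0))⟩
  obtain ⟨t₀, ht₀, hrel⟩ := hconj W₁' W₂' hW₁le hW₂le hW₁sr hW₂sr isoW₁ isoW₂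
  refine ⟨Φ t₀, ?_, ?_⟩
  · rw [← hmapS]
    exact ⟨t₀, ht₀, rfl⟩
  · have h1 := congrArg (Subgroup.map Φ.toMonoidHom) hrel
    rw [hW₁', hW₂', map_map_symm, map_ConjSub, map_map_symm] at h1
    exact h1
end Mega


section TieTransport

variable {X : Type*}

/-- Blocks with equal restriction-kernels receive the conjugation relation simultaneously. -/
lemma tie_transport {S U V : Subgroup (Equiv.Perm X)} {A B : Set X}
    (hSA : S ≤ MulAction.stabilizer (Equiv.Perm X) A)
    (hSB : S ≤ MulAction.stabilizer (Equiv.Perm X) B)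
    (hU : U ≤ S) (hV : V ≤ S)
    (hker : ((restrictHom (G := Equiv.Perm X) A).comp (Subgroup.inclusion hSA)).ker
          = ((restrictHom (G := Equiv.Perm X) B).comp (Subgroup.inclusion hSB)).ker)
    (h : ↥S)
    (hrel : InducedSub V A = ConjSub
      (((restrictHom (G := Equiv.Perm X) A).comp (Subgroup.inclusion hSA)) h)
      (InducedSub U A)) :
    InducedSub V B = ConjSub
      (((restrictHom (G := Equiv.Perm X) B).comp (Subgroup.inclusion hSB)) h)
      (InducedSub U B) := by
  set fA := (restrictHom (G := Equiv.Perm X) A).comp (Subgroup.inclusion hSA) with hfA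
  set fB := (restrictHom (G := Equiv.Perm X) B).comp (Subgroup.inclusion hSB) with hfB
  have hsurj : Function.Surjective fA.rangeRestrict := fA.rangeRestrict_surjective
  have hle : fA.rangeRestrict.ker ≤ fB.ker := by
    rw [MonoidHom.ker_rangeRestrict, hker]
  set φ : ↥fA.range →* Equiv.Perm ↥B := (fA.rangeRestrict.liftOfSurjective hsurj) ⟨fB, hle⟩
    with hφ
  have hφcomp : φ.comp fA.rangeRestrict = fB :=
    MonoidHom.liftOfRightInverse_comp _ _ _ ⟨fB, hle⟩
  have hsub : fA.range.subtype.comp fA.rangeRestrict = fA := by ext x; rfl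
  have hinrange : Subgroup.map fA.rangeRestrict (V.subgroupOf S)
      = ConjSub (fA.rangeRestrict h) (Subgroup.map fA.rangeRestrict (U.subgroupOf S)) := by
    apply Subgroup.map_injective fA.range.subtype_injective
    rw [map_ConjSub, Subgroup.map_map, Subgroup.map_map, hsub]
    rw [ind_eq_map hSA hV, ind_eq_map hSA hU]
    have hcoe : fA.range.subtype (fA.rangeRestrict h) = fA h := rfl
    rw [hcoe]
    exact hrel
  have final := congrArg (Subgroup.map φ) hinrange
  rw [map_ConjSub, Subgroup.map_map, Subgroup.map_map, hφcomp] at final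
  rw [ind_eq_map hSB hV, ind_eq_map hSB hU] at final
  have happ : φ (fA.rangeRestrict h) = fB h := DFunLike.congr_fun hφcomp h
  rwa [happ] at final

end TieTransport


/-- Lemma 4.3, part (3). -/
theorem statement4 {X : Type*} [Finite X] (G : Subgroup (Equiv.Perm X)) (hG : SubTrans G)
    (𝓑 : Set (Set X)) (h𝓑 : IsNormalBlockSystem G 𝓑) (B₀ : Set X) (hB₀ : B₀ ∈ 𝓑)
    (hTtrans : SubTrans (SocleIn (InducedSub (FixBlocks G 𝓑) B₀)))
    (hTsimple : IsSimpleGroup ↥(SocleIn (InducedSub (FixBlocks G 𝓑) B₀)))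
    (hTnonab : ∃ a b : ↥(SocleIn (InducedSub (FixBlocks G 𝓑) B₀)), a * b ≠ b * a)
    (U V : Subgroup (Equiv.Perm X))
    (hU : U ≤ SocleIn (FixBlocks G 𝓑)) (hV : V ≤ SocleIn (FixBlocks G 𝓑))
    (hUs : SubSemiregular U) (hVs : SubSemiregular V)
    (hUV : Nonempty (↥U ≃* ↥V))
    (hconj : ∀ W₁ W₂ : Subgroup (Equiv.Perm ↥B₀),
      W₁ ≤ SocleIn (InducedSub (FixBlocks G 𝓑) B₀) →
      W₂ ≤ SocleIn (InducedSub (FixBlocks G 𝓑) B₀) →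
      SubSemiregular W₁ → SubSemiregular W₂ →
      Nonempty (↥W₁ ≃* ↥(InducedSub U B₀)) → Nonempty (↥W₂ ≃* ↥(InducedSub U B₀)) →
      ∃ t ∈ SocleIn (InducedSub (FixBlocks G 𝓑) B₀), W₂ = ConjSub t W₁) :
    ∃ δ ∈ FixBlocks G 𝓑, SubOrbits U = SubOrbits (ConjSub δ V) := by
  classical
  obtain ⟨h𝓑sys, -⟩ := h𝓑
  set N := FixBlocks G 𝓑 with hNdef
  set S := SocleIn N with hSdef
  have hSstab : ∀ {B : Set X}, B ∈ 𝓑 → S ≤ MulAction.stabilizer (Equiv.Perm X) B :=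
    fun hB => (SocleIn_le N).trans (FixBlocks_le_stab hB)
  let ι := {B : Set X // B ∈ 𝓑}
  haveI : Finite (Set X) := inferInstance
  haveI : Finite ι := Subtype.finite
  haveI : DecidableEq ι := Classical.decEq ι
  let f : ∀ b : ι, ↥S →* Equiv.Perm ↥(b.val) := fun b =>
    (restrictHom (G := Equiv.Perm X) b.val).comp (Subgroup.inclusion (hSstab b.property))
  have hrange : ∀ b : ι, (f b).range = InducedSub S b.val :=
    fun b => range_eq_InducedSub (hSstab b.property)
  have hpkg : ∀ b : ι, IsSimpleGroup ↥(SocleIn (InducedSub N b.val)) ∧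
      (∃ a c : ↥(SocleIn (InducedSub N b.val)), a * c ≠ c * a) ∧
      (∃ t ∈ SocleIn (InducedSub N b.val),
        InducedSub V b.val = ConjSub t (InducedSub U b.val)) :=
    fun b => block_package hG h𝓑sys hB₀ hTsimple hTnonab hU hV hUs hVs hUV hconj b.property
  let Good : Set ι := {b | InducedSub S b.val ≠ ⊥}
  have hsocle_eq : ∀ b ∈ Good, InducedSub S b.val = SocleIn (InducedSub N b.val) :=
    fun b hb => socle_push_eq (FixBlocks_le_stab b.property) (hpkg b).1 hb
  have hconj_choice : ∀ b : ι, b ∈ Good → ∃ t : ↥(f b).range,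
      InducedSub V b.val = ConjSub (t : Equiv.Perm ↥(b.val)) (InducedSub U b.val) := by
    intro b hb
    obtain ⟨t, htmem, hrel⟩ := (hpkg b).2.2
    refine ⟨⟨t, ?_⟩, hrel⟩
    rw [hrange b, hsocle_eq b hb]
    exact htmem
  choose tfun htfun using hconj_choice
  let KK : ι → Subgroup ↥S := fun b => (f b).ker
  let kernels : Set (Subgroup ↥S) := KK '' Good
  have hrepex : ∀ k ∈ kernels, ∃ b, b ∈ Good ∧ KK b = k := by
    rintro k ⟨b, hb, rfl⟩
    exact ⟨b, hb, rfl⟩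
  choose rep hrepG hrepK using hrepex
  let Sset : Set ι := {b | ∃ (k : Subgroup ↥S) (hk : k ∈ kernels), b = rep k hk}
  let s : Finset ι := Set.Finite.toFinset (Set.toFinite Sset)
  have hmem_s : ∀ b : ι, b ∈ s ↔ ∃ (k : Subgroup ↥S) (hk : k ∈ kernels), b = rep k hk := by
    intro b
    rw [Set.Finite.mem_toFinset]
    rfl
  have hs_good : ∀ b ∈ s, b ∈ Good := by
    intro b hb
    obtain ⟨k, hk, rfl⟩ := (hmem_s b).mp hb
    exact hrepG k hk
  have hsimple_s : ∀ b ∈ s, IsSimpleGroup ↥(f b).range := by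
    intro b hb
    rw [hrange b, hsocle_eq b (hs_good b hb)]
    exact (hpkg b).1
  have hna_s : ∀ b ∈ s, ∃ a c : ↥(f b).range, a * c ≠ c * a := by
    intro b hb
    rw [hrange b, hsocle_eq b (hs_good b hb)]
    exact (hpkg b).2.1
  have hker_s : ∀ b₁ ∈ s, ∀ b₂ ∈ s, b₁ ≠ b₂ → (f b₁).ker ≠ (f b₂).ker := by
    intro b₁ hb₁ b₂ hb₂ hne
    obtain ⟨k₁, hk₁, rfl⟩ := (hmem_s b₁).mp hb₁
    obtain ⟨k₂, hk₂, rfl⟩ := (hmem_s b₂).mp hb₂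
    intro hkeq
    apply hne
    have h1 : k₁ = k₂ := by
      rw [← hrepK k₁ hk₁, ← hrepK k₂ hk₂]
      exact hkeq
    subst h1
    rfl
  let t : ∀ b : ι, ↥(f b).range := fun b => if hb : b ∈ Good then tfun b hb else 1
  obtain ⟨h, hh⟩ := surj_family f s hsimple_s hna_s hker_s t
  have hrel_all : ∀ b : ι,
      InducedSub V b.val = ConjSub (f b h) (InducedSub U b.val) := by
    intro b
    by_cases hb : b ∈ Good
    · have hkmem : KK b ∈ kernels := ⟨b, hb, rfl⟩
      set br := rep (KK b) hkmem with hbr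
      have hbrG : br ∈ Good := hrepG _ _
      have hbrs : br ∈ s := (hmem_s br).mpr ⟨KK b, hkmem, rfl⟩
      have hkereq : (f br).ker = (f b).ker := hrepK (KK b) hkmem
      have hrel_br : InducedSub V br.val = ConjSub ((f br) h) (InducedSub U br.val) := by
        have h1 := hh br hbrs
        have h2 : t br = tfun br hbrG := dif_pos hbrG
        rw [h2] at h1
        rw [h1]
        exact htfun br hbrG
      exact tie_transport (hSstab br.property) (hSstab b.property)
        hU hV hkereq h hrel_br
    · have hbot : InducedSub S b.val = ⊥ := not_not.mp hb
      have hUbot : InducedSub U b.val = ⊥ :=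
        le_bot_iff.mp (le_trans (InducedSub_mono hU _) hbot.le)
      have hVbot : InducedSub V b.val = ⊥ :=
        le_bot_iff.mp (le_trans (InducedSub_mono hV _) hbot.le)
      rw [hUbot, hVbot, ConjSub_bot]
  refine ⟨((h : Equiv.Perm X))⁻¹, ?_, ?_⟩
  · exact N.inv_mem ((SocleIn_le N) h.property)
  · have hδstab : ∀ {B : Set X}, B ∈ 𝓑 →
        ((h : Equiv.Perm X))⁻¹ ∈ MulAction.stabilizer (Equiv.Perm X) B :=
      fun hB => inv_mem (hSstab hB h.property)
    apply suborbits_eq_of_blockwise h𝓑sys.2.1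
    · intro B hB
      exact hU.trans (hSstab hB)
    · intro B hB
      intro x hx
      rw [mem_ConjSub] at hx
      obtain ⟨v, hv, rfl⟩ := hx
      have hvstab : v ∈ MulAction.stabilizer (Equiv.Perm X) B := hV.trans (hSstab hB) hv
      exact mul_mem (mul_mem (inv_mem (hδstab hB)) hvstab) (hδstab hB)
    · intro B hB
      have hd := hδstab hB
      rw [InducedSub_conj hd]
      have hb : (⟨B, hB⟩ : ι).val = B := rfl
      rw [hrel_all ⟨B, hB⟩, ConjSub_comp]
      have hres_inv : restrictHom (G := Equiv.Perm X) B ⟨((h : Equiv.Perm X))⁻¹, hd⟩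
          = (f ⟨B, hB⟩ h)⁻¹ := by
        have hmem : (h : Equiv.Perm X) ∈ MulAction.stabilizer (Equiv.Perm X) B :=
          hSstab hB h.property
        have heq : (⟨((h : Equiv.Perm X))⁻¹, hd⟩ : ↥(MulAction.stabilizer (Equiv.Perm X) B))
            = (⟨(h : Equiv.Perm X), hmem⟩ : ↥(MulAction.stabilizer (Equiv.Perm X) B))⁻¹ :=
          Subtype.ext rfl
        rw [heq, map_inv]
        rfl
      rw [hres_inv, mul_inv_cancel, ConjSub_one]
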